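/- arXiv:math/9405206 — 6 statements merged into one kernel-verified Lean document; each statement's English description precedes it below -/
import Mathlib

section
/- Let G be a torsionless abelian group of infinite rank (i.e., G embeds in a product of copies of ℤ, equivalently Hom(G, ℤ) separates points of G), let z be a rational number, and let σ be a homomorphism from G into its divisible hull (G ⊗ ℚ) whose image has finite rank. If the map g ↦ z·g + σ(g) sends G into (the image of) G, then z is an integer. -/
/-!
The ℚ-linear extensions of homomorphisms `G →+ ℤ` separate the points of `ℚ ⊗ G`, so by infinite
rank they span an infinite-dimensional space of functionals. Such a space meets the annihilator of
the finite-dimensional span of the image of `σ` nontrivially, and clearing denominators yields a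
nonzero `ψ : G →+ ℤ` whose extension kills the image of `σ`. Applying it to
`z • g + σ g = g'` gives `ψ g' = z * ψ g`, so `z ^ n * ψ g₀` is an integer for all `n` with
`ψ g₀ ≠ 0`, which forces the denominator of `z` to be `1`.
-/

open TensorProduct Module

theorem exists_zsmul_mem_of_mem_span {M : Type*} [AddCommGroup M] [Module ℚ M] {A : AddSubgroup M}
    {v : M} (hv : v ∈ Submodule.span ℚ (A : Set M)) : ∃ d : ℤ, d ≠ 0 ∧ d • v ∈ A := by
  induction hv using Submodule.span_induction with
  | mem v hv => exact ⟨1, one_ne_zero, by simpa using hv⟩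
  | zero => exact ⟨1, one_ne_zero, by simp⟩
  | add v w _ _ hv hw =>
    obtain ⟨d, hd, hdv⟩ := hv
    obtain ⟨e, he, hew⟩ := hw
    refine ⟨d * e, mul_ne_zero hd he, ?_⟩
    rw [smul_add, mul_comm d e, mul_smul, mul_comm e d, mul_smul]
    exact add_mem (A.zsmul_mem hdv e) (A.zsmul_mem hew d)
  | smul q v _ hv =>
    obtain ⟨d, hd, hdv⟩ := hv
    refine ⟨q.den * d, mul_ne_zero (by exact_mod_cast q.den_ne_zero) hd, ?_⟩
    have : (q.den * d : ℤ) • q • v = q.num • d • v := by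
      simp only [← Int.cast_smul_eq_zsmul ℚ, smul_smul]
      rw [← Rat.den_mul_eq_num]
      push_cast
      ring_nf
    rw [this]
    exact A.zsmul_mem hdv _

section

variable {K V : Type*} [Field K] [AddCommGroup V] [Module K V]

theorem Submodule.finiteDimensional_of_dualCoannihilator_eq_bot (W : Submodule K (Dual K V))
    [FiniteDimensional K W] (h : W.dualCoannihilator = ⊥) : FiniteDimensional K V := by
  have := Free.of_divisionRing K W
  refine FiniteDimensional.of_injective (W.dualRestrict ∘ₗ Dual.eval K V) ?_
  rwa [← LinearMap.ker_eq_bot, LinearMap.ker_comp]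

theorem Submodule.finiteDimensional_of_disjoint_dualAnnihilator (U : Submodule K V)
    [FiniteDimensional K U] {W : Submodule K (Dual K V)} (h : Disjoint W U.dualAnnihilator) :
    FiniteDimensional K W :=
  FiniteDimensional.of_injective (U.dualRestrict.domRestrict W)
    (LinearMap.injective_domRestrict_iff.mpr h)

end

theorem Rat.exists_int_eq_of_pow_mul_int {z : ℚ} {k : ℤ} (hk : k ≠ 0)
    (h : ∀ n : ℕ, ∃ j : ℤ, (j : ℚ) = z ^ n * k) : ∃ m : ℤ, (m : ℚ) = z := by
  refine ⟨z.num, (Rat.den_eq_one_iff z).mp ?_⟩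
  by_contra hden
  obtain ⟨j, hj⟩ := h k.natAbs
  have hdvd : ((z.den ^ k.natAbs : ℕ) : ℤ) ∣ k := by
    have hzk : z ^ k.natAbs = Rat.divInt j k := by
      rw [Rat.divInt_eq_div, hj]; field_simp
    have := Rat.den_dvd j k
    rwa [← hzk, Rat.den_pow] at this
  have hlt : k.natAbs < z.den ^ k.natAbs :=
    k.natAbs.lt_pow_self (by have := z.pos; omega)
  exact hlt.not_ge (Nat.le_of_dvd (Int.natAbs_pos.mpr hk) (Int.natCast_dvd.mp hdvd))

section

variable {G : Type*} [AddCommGroup G]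

noncomputable def toRatDual : (G →+ ℤ) →+ Dual ℚ (ℚ ⊗[ℤ] G) :=
  (LinearMap.liftBaseChangeEquiv ℚ).toAddMonoidHom.comp
    ((addMonoidHomLequivInt ℤ).toAddMonoidHom.comp (AddMonoidHom.compHom (Int.castAddHom ℚ)))

@[simp]
theorem toRatDual_tmul (φ : G →+ ℤ) (q : ℚ) (g : G) : toRatDual φ (q ⊗ₜ g) = q * φ g := by
  simp [toRatDual]

theorem exists_zsmul_eq_one_tmul (x : ℚ ⊗[ℤ] G) : ∃ m : ℤ, m ≠ 0 ∧ ∃ g : G, m • x = 1 ⊗ₜ g := by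
  obtain ⟨⟨g, m⟩, h⟩ := IsLocalizedModule.surj (nonZeroDivisors ℤ) (TensorProduct.mk ℤ ℚ G 1) x
  exact ⟨m, nonZeroDivisors.coe_ne_zero m, g, h⟩

theorem dualCoannihilator_span_range_toRatDual
    (htorsionless : ∀ g : G, g ≠ 0 → ∃ φ : G →+ ℤ, φ g ≠ 0) :
    (Submodule.span ℚ (Set.range (toRatDual (G := G)))).dualCoannihilator = ⊥ := by
  refine (Submodule.eq_bot_iff _).mpr fun x hx => ?_
  rw [Submodule.mem_dualCoannihilator] at hx
  obtain ⟨m, hm, g, hmx⟩ := exists_zsmul_eq_one_tmul x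
  have hg : g = 0 := by
    by_contra hg
    obtain ⟨φ, hφ⟩ := htorsionless g hg
    have hφx := hx (toRatDual φ) (Submodule.subset_span ⟨φ, rfl⟩)
    have := congrArg (toRatDual φ) hmx
    rw [map_zsmul, hφx, smul_zero, toRatDual_tmul, one_mul] at this
    exact hφ (by exact_mod_cast this.symm)
  rw [hg, tmul_zero, ← Int.cast_smul_eq_zsmul ℚ] at hmx
  exact (smul_eq_zero.mp hmx).resolve_left (Int.cast_ne_zero.mpr hm)

theorem exists_ne_zero_toRatDual_mem_dualAnnihilator
    (htorsionless : ∀ g : G, g ≠ 0 → ∃ φ : G →+ ℤ, φ g ≠ 0)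
    (hG : ¬ FiniteDimensional ℚ (ℚ ⊗[ℤ] G)) (V : Submodule ℚ (ℚ ⊗[ℤ] G)) [FiniteDimensional ℚ V] :
    ∃ ψ : G →+ ℤ, ψ ≠ 0 ∧ toRatDual ψ ∈ V.dualAnnihilator := by
  let W := Submodule.span ℚ (Set.range (toRatDual (G := G)))
  have hW : ¬ FiniteDimensional ℚ W := fun _ =>
    hG (W.finiteDimensional_of_dualCoannihilator_eq_bot
      (dualCoannihilator_span_range_toRatDual htorsionless))
  obtain ⟨w, hwW, hwV, hw0⟩ : ∃ w ∈ W, w ∈ V.dualAnnihilator ∧ w ≠ 0 := by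
    by_contra! h
    exact hW (V.finiteDimensional_of_disjoint_dualAnnihilator (Submodule.disjoint_def.mpr h))
  obtain ⟨d, hd, ψ, hψ⟩ := exists_zsmul_mem_of_mem_span (A := toRatDual.range) hwW
  refine ⟨ψ, ?_, hψ ▸ zsmul_mem hwV d⟩
  rintro rfl
  rw [map_zero, eq_comm, ← Int.cast_smul_eq_zsmul ℚ] at hψ
  exact smul_ne_zero (Int.cast_ne_zero.mpr hd) hw0 hψ

end

open TensorProduct in
/-- If `G` is a torsionless abelian group of infinite rank, `z` a rational scalar and
`σ : G → ℚ ⊗ G` a finite-rank homomorphism into the divisible hull such that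
`g ↦ z·g + σ(g)` maps `G` into (the canonical image of) `G`, then `z` is an integer. -/
theorem stmt2 {G : Type*} [AddCommGroup G]
    (htorsionless : ∀ g : G, g ≠ 0 → ∃ φ : G →+ ℤ, φ g ≠ 0)
    (hrank : Cardinal.aleph0 ≤ Module.rank ℚ (ℚ ⊗[ℤ] G))
    (z : ℚ) (σ : G →+ ℚ ⊗[ℤ] G)
    (hσ : Module.rank ℚ (Submodule.span ℚ (Set.range σ)) < Cardinal.aleph0)
    (hmaps : ∀ g : G, ∃ g' : G, z • ((1:ℚ) ⊗ₜ[ℤ] g) + σ g = (1:ℚ) ⊗ₜ[ℤ] g') :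
    ∃ n : ℤ, (n : ℚ) = z := by
  have : FiniteDimensional ℚ (Submodule.span ℚ (Set.range σ)) := Module.rank_lt_aleph0_iff.mp hσ
  obtain ⟨ψ, hψ0, hψσ⟩ := exists_ne_zero_toRatDual_mem_dualAnnihilator htorsionless
    (fun h => hrank.not_gt (Module.rank_lt_aleph0_iff.mpr h)) (Submodule.span ℚ (Set.range σ))
  obtain ⟨g₀, hg₀⟩ := DFunLike.ne_iff.mp hψ0
  have hstep : ∀ g, ∃ g', (ψ g' : ℚ) = z * ψ g := fun g => by
    obtain ⟨g', hg'⟩ := hmaps g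
    refine ⟨g', ?_⟩
    have := congrArg (toRatDual ψ) hg'
    rwa [map_add, map_smul, (Submodule.mem_dualAnnihilator _).mp hψσ _
      (Submodule.subset_span ⟨g, rfl⟩), add_zero, toRatDual_tmul, toRatDual_tmul, one_mul,
      one_mul, smul_eq_mul, eq_comm] at this
  have hpow : ∀ n : ℕ, ∃ g, (ψ g : ℚ) = z ^ n * ψ g₀ := by
    intro n
    induction n with
    | zero => exact ⟨g₀, by simp⟩
    | succ n ih =>
      obtain ⟨g, hg⟩ := ih
      obtain ⟨g', hg'⟩ := hstep g
      exact ⟨g', by rw [hg', hg, pow_succ]; ring⟩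
  exact Rat.exists_int_eq_of_pow_mul_int hg₀ fun n =>
    let ⟨g, hg⟩ := hpow n; ⟨ψ g, hg⟩
end

section
/- Let G be a torsionless abelian group of infinite rank and σ : G → G ⊗ ℚ a homomorphism of finite rank. Then there exists a nonzero homomorphism φ : G → ℤ vanishing on G ∩ Range(σ), and such a φ can be chosen surjective onto ℤ. -/
/-!
Only finitely many elements `g₁, …, gₖ` of `G` are needed to span `Range σ` rationally, since
every element of `ℚ ⊗ G` is a rational multiple of some `1 ⊗ g`. Some nonzero `φ : G → ℤ`
vanishes on all the `gᵢ`: otherwise restriction to them would embed `Hom(G, ℤ)` into `ℤᵏ`,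
so `Hom(G, ℤ)` would be finitely generated, and since it separates points `G` would embed
into a finite free group, contradicting infinite rank. The `ℚ`-linear extension of `φ` then
kills `Range σ`, and dividing `φ` by the generator of its image makes it surjective.
-/

open TensorProduct Module Submodule

theorem Submodule.FG.exists_finset_le_span_image {R M ι : Type*} [Semiring R] [AddCommMonoid M]
    [Module R M] {N : Submodule R M} (hN : N.FG) {v : ι → M} (h : N ≤ span R (Set.range v)) :
    ∃ s : Finset ι, N ≤ span R (v '' s) := by
  rw [span_range_eq_iSup] at h
  obtain ⟨s, hs⟩ :=
    CompleteLattice.IsCompactElement.exists_finset_of_le_iSup _ ((fg_iff_compact N).mp hN) _ h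
  exact ⟨s, hs.trans_eq (by rw [span_eq_iSup_of_singleton_spans, iSup_image, Finset.iSup_coe])⟩

theorem TensorProduct.span_range_mk_one_eq_top (R A M : Type*) [CommSemiring R] [Semiring A]
    [Algebra R A] [AddCommMonoid M] [Module R M] :
    span A (Set.range (TensorProduct.mk R A M 1)) = ⊤ := by
  rw [← LinearMap.coe_range, ← Submodule.map_top, ← baseChange_eq_span, baseChange_top]

theorem Module.Dual.eq_zero_of_one_tmul_mem_span {R A M : Type*} [CommSemiring R] [CommSemiring A]
    [Algebra R A] [FaithfulSMul R A] [AddCommMonoid M] [Module R M] (f : Dual R M) {s : Set M}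
    (hs : ∀ x ∈ s, f x = 0) {x : M}
    (hx : (1 : A) ⊗ₜ[R] x ∈ span A (TensorProduct.mk R A M 1 '' s)) :
    f x = 0 := by
  set F := ((Algebra.linearMap R A).comp f).liftBaseChange A
  have hker : span A (TensorProduct.mk R A M 1 '' s) ≤ LinearMap.ker F := by
    rw [span_le]
    rintro _ ⟨y, hy, rfl⟩
    simp [F, hs y hy]
  simpa [F] using hker hx

section Dual

variable {R M : Type*} [CommRing R] [IsNoetherianRing R] [AddCommGroup M] [Module R M]

theorem Module.Finite.of_separating_of_finite_dual
    (hsep : ∀ x : M, x ≠ 0 → ∃ f : Dual R M, f x ≠ 0) [Module.Finite R (Dual R M)] :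
    Module.Finite R M := by
  obtain ⟨s, hs⟩ := Module.Finite.fg_top (R := R) (M := Dual R M)
  let F : M →ₗ[R] (s → R) := LinearMap.pi fun f => (f : Dual R M)
  have hF : Function.Injective F := by
    rw [← LinearMap.ker_eq_bot, eq_bot_iff]
    intro x hx
    by_contra hx0
    obtain ⟨f, hf⟩ := hsep x hx0
    have hle : span R (s : Set (Dual R M)) ≤ LinearMap.ker (Dual.eval R M x) := by
      rw [span_le]
      intro g hg
      exact congrFun (LinearMap.mem_ker.mp hx) ⟨g, hg⟩
    exact hf (hle (hs ▸ mem_top))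
  have := isNoetherian_of_injective F hF
  infer_instance

theorem Module.Dual.exists_ne_zero_forall_eq_zero [Nontrivial R]
    (hsep : ∀ x : M, x ≠ 0 → ∃ f : Dual R M, f x ≠ 0) (hrank : Cardinal.aleph0 ≤ Module.rank R M)
    (s : Finset M) : ∃ f : Dual R M, f ≠ 0 ∧ ∀ x ∈ s, f x = 0 := by
  by_contra! h
  let res : Dual R M →ₗ[R] (s → R) := LinearMap.pi fun x => Dual.eval R M x
  have hres : Function.Injective res := by
    rw [← LinearMap.ker_eq_bot, eq_bot_iff]
    intro f hf
    by_contra hf0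
    obtain ⟨x, hx, hfx⟩ := h f hf0
    exact hfx (congrFun (LinearMap.mem_ker.mp hf) ⟨x, hx⟩)
  have := isNoetherian_of_injective res hres
  have := Module.Finite.of_separating_of_finite_dual hsep
  exact (Module.rank_lt_aleph0 R M).not_ge hrank

end Dual

theorem AddMonoidHom.exists_zsmul_surjective {G : Type*} [AddCommGroup G] {φ : G →+ ℤ}
    (hφ : φ ≠ 0) : ∃ n : ℤ, n ≠ 0 ∧ ∃ ψ : G →+ ℤ, Function.Surjective ψ ∧ φ = n • ψ := by
  obtain ⟨n, hn⟩ := Int.subgroup_cyclic φ.range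
  rw [← AddSubgroup.zmultiples_eq_closure] at hn
  have hdvd (g : G) : n ∣ φ g := by
    obtain ⟨k, hk⟩ := AddSubgroup.mem_zmultiples_iff.mp (hn ▸ AddMonoidHom.mem_range.mpr ⟨g, rfl⟩)
    exact ⟨k, by rw [← hk, smul_eq_mul, mul_comm]⟩
  obtain ⟨g₀, hg₀⟩ : n ∈ φ.range := hn ▸ AddSubgroup.mem_zmultiples n
  have hn0 : n ≠ 0 := by
    rintro rfl
    exact hφ (AddMonoidHom.ext fun g => zero_dvd_iff.mp (hdvd g))
  let ψ : G →+ ℤ :=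
    { toFun := fun g => φ g / n
      map_zero' := by simp
      map_add' := fun a b => by rw [map_add, Int.add_ediv_of_dvd_left (hdvd a)] }
  refine ⟨n, hn0, ψ, fun m => ⟨m • g₀, ?_⟩, AddMonoidHom.ext fun g => ?_⟩
  · simp [ψ, hg₀, hn0]
  · simp [ψ, Int.mul_ediv_cancel' (hdvd g)]

open TensorProduct in
/-- For a torsionless abelian group `G` of infinite rank and a finite-rank homomorphism
`σ : G → ℚ ⊗ G`, there is a surjective (hence nonzero) homomorphism `φ : G → ℤ`
vanishing on `G ∩ Range σ` (the preimage in `G` of the range of `σ`). -/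
theorem stmt3 {G : Type*} [AddCommGroup G]
    (htorsionless : ∀ g : G, g ≠ 0 → ∃ φ : G →+ ℤ, φ g ≠ 0)
    (hrank : Cardinal.aleph0 ≤ Module.rank ℚ (ℚ ⊗[ℤ] G))
    (σ : G →+ ℚ ⊗[ℤ] G)
    (hσ : Module.rank ℚ (Submodule.span ℚ (Set.range σ)) < Cardinal.aleph0) :
    ∃ φ : G →+ ℤ, Function.Surjective φ ∧
      ∀ g : G, ((1:ℚ) ⊗ₜ[ℤ] g) ∈ Set.range σ → φ g = 0 := by
  have hrankℤ : Cardinal.aleph0 ≤ Module.rank ℤ G := by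
    rwa [(TensorProduct.isBaseChange ℤ G ℚ).rank_eq] at hrank
  have hsep (g : G) (hg : g ≠ 0) : ∃ f : Dual ℤ G, f g ≠ 0 :=
    let ⟨φ, hφ⟩ := htorsionless g hg; ⟨φ.toIntLinearMap, hφ⟩
  have hW : (span ℚ (Set.range σ)).FG :=
    Module.Finite.iff_fg.mp (Module.rank_lt_aleph0_iff.mp hσ)
  obtain ⟨S, hS⟩ := hW.exists_finset_le_span_image
    ((span_range_mk_one_eq_top ℤ ℚ G).symm ▸ le_top)
  obtain ⟨f, hf0, hfS⟩ := Dual.exists_ne_zero_forall_eq_zero hsep hrankℤ S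
  obtain ⟨n, hn0, ψ, hψ, hfψ⟩ := AddMonoidHom.exists_zsmul_surjective
    (φ := f.toAddMonoidHom) fun h => hf0 (LinearMap.ext fun x => DFunLike.congr_fun h x)
  refine ⟨ψ, hψ, fun g hg => ?_⟩
  have hfg : f g = 0 := f.eq_zero_of_one_tmul_mem_span hfS (hS (subset_span hg))
  have hnψ : n * ψ g = 0 := by simpa [hfg] using (DFunLike.congr_fun hfψ g).symm
  exact (mul_eq_zero.mp hnψ).resolve_left hn0
end

section
/- Let P = ℤ^ℕ, S the finitely supported sequences, and β : P → P defined from a sequence (bₙ) of nonzero elements of S with pairwise disjoint (increasing) supports as β(Σᵢ eᵢxᵢ) = Σᵢ bᵢxᵢ. Then β⁻¹(S) = S, i.e., if β(y) has finite support then y has finite support. -/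
open Classical in
/-- The map `β` determined by a sequence `b` of elements of `S` with pairwise disjoint
supports. -/
noncomputable def betaMap (b : ℕ → ℕ → ℤ) (x : ℕ → ℤ) : ℕ → ℤ :=
  fun j => if h : ∃ n, b n j ≠ 0 then b h.choose j * x h.choose else 0

/-- `β⁻¹(S) = S`: if `β y` has finite support then `y` has finite support. -/
theorem stmt5 (b : ℕ → ℕ → ℤ)
    (hfin : ∀ n, {j | b n j ≠ 0}.Finite)
    (hne : ∀ n, b n ≠ 0)
    (hincr : ∀ m n, m < n → ∀ i j, b m i ≠ 0 → b n j ≠ 0 → i < j)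
    (y : ℕ → ℤ) (h : {j | betaMap b y j ≠ 0}.Finite) :
    {n | y n ≠ 0}.Finite := by
  classical
  -- disjointness: a column j can be in the support of at most one b n
  have hdisj : ∀ m n j, b m j ≠ 0 → b n j ≠ 0 → m = n := by
    intro m n j hm hn
    rcases lt_trichotomy m n with hlt | heq | hlt
    · exact absurd (hincr m n hlt j j hm hn) (lt_irrefl j)
    · exact heq
    · exact absurd (hincr n m hlt j j hn hm) (lt_irrefl j)
  have hex : ∀ n, ∃ j, b n j ≠ 0 := by
    intro n
    by_contra hc
    push_neg at hc
    exact hne n (funext fun j => hc j)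
  set f : ℕ → ℕ := fun n => (hex n).choose with hf
  have hfspec : ∀ n, b n (f n) ≠ 0 := fun n => (hex n).choose_spec
  have hinj : Function.Injective f := by
    intro m n hmn
    exact hdisj m n (f m) (hfspec m) (hmn ▸ hfspec n)
  have hsub : {n | y n ≠ 0} ⊆ f ⁻¹' {j | betaMap b y j ≠ 0} := by
    intro n hn
    have hexn : ∃ m, b m (f n) ≠ 0 := ⟨n, hfspec n⟩
    have hch : hexn.choose = n := hdisj _ _ _ hexn.choose_spec (hfspec n)
    simp only [Set.mem_preimage, Set.mem_setOf_eq, betaMap, dif_pos hexn]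
    rw [hch]
    exact mul_ne_zero (hfspec n) hn
  exact ((h.preimage hinj.injOn).subset hsub)
end

section
/- Let P = ℤ^ℕ and S ⊆ P the finitely supported sequences. Let V ⊆ P \ S be a countable set. Then the set of x ∈ P for which the pure subgroup ⟨S ∪ {x}⟩₊ of P generated by S and x contains some element of V is countable. (Here ⟨S ∪ {x}⟩₊ contains v ∈ V iff there exist s ∈ S, m ∈ ℤ, n ∈ ℤ \ {0} with s + m·x = n·v; for each such s, m, n, v with m ≠ 0 there is at most one x.) -/
/-- The finitely supported sequences form an additive subgroup of `ℕ → ℤ`. -/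
def finSuppGrp : AddSubgroup (ℕ → ℤ) where
  carrier := {y : ℕ → ℤ | {i | y i ≠ 0}.Finite}
  zero_mem' := by simp
  add_mem' := by
    intro a b ha hb
    refine (ha.union hb).subset ?_
    intro i hi
    simp only [Set.mem_setOf_eq, Set.mem_union] at *
    by_contra h
    push_neg at h
    simp [h.1, h.2] at hi
  neg_mem' := by
    intro a ha
    simpa using ha

/-- Let `S` be the set of finitely supported sequences in `P = ℤ^ℕ` and `V ⊆ P \ S`
countable. Then the set of `x ∈ P` whose pure closure `⟨S ∪ {x}⟩₊`
(`{p | k • p ∈ ⟨S ∪ {x}⟩ for some k ≠ 0}`) contains some element of `V` is countable. -/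
theorem stmt8 (V : Set (ℕ → ℤ)) (hVc : V.Countable)
    (hVS : ∀ v ∈ V, ¬ {i | v i ≠ 0}.Finite) :
    {x : ℕ → ℤ | ∃ v ∈ V, ∃ k : ℤ, k ≠ 0 ∧
      k • v ∈ AddSubgroup.closure
        ({y : ℕ → ℤ | {i | y i ≠ 0}.Finite} ∪ {x})}.Countable := by
  haveI : Countable V := hVc.to_subtype
  -- index type
  let A : V × ℤ × ℤ × (ℕ →₀ ℤ) → Set (ℕ → ℤ) := fun p =>
    {x | p.2.2.1 ≠ 0 ∧ p.2.2.1 • x = p.2.1 • (p.1 : ℕ → ℤ) - ⇑p.2.2.2}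
  have hsub : ∀ p, (A p).Subsingleton := by
    rintro ⟨v, k, m, s⟩ x hx y hy
    funext i
    have hm : m ≠ 0 := hx.1
    have h1 : m • x = m • y := hx.2.trans hy.2.symm
    have h2 : m * x i = m * y i := by
      have := congrFun h1 i
      simpa [Pi.smul_apply, smul_eq_mul] using this
    exact mul_left_cancel₀ hm h2
  have hcnt : (⋃ p, A p).Countable :=
    Set.countable_iUnion fun p => (hsub p).countable
  refine hcnt.mono ?_
  rintro x ⟨v, hv, k, hk, hmem⟩
  have hS : ({y : ℕ → ℤ | {i | y i ≠ 0}.Finite} : Set (ℕ → ℤ)) = ↑finSuppGrp := rfl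
  rw [hS, AddSubgroup.closure_union, AddSubgroup.closure_eq] at hmem
  rw [AddSubgroup.mem_sup] at hmem
  obtain ⟨s, hs, z, hz, hsum⟩ := hmem
  rw [AddSubgroup.mem_closure_singleton] at hz
  obtain ⟨m, rfl⟩ := hz
  -- m ≠ 0
  have hm : m ≠ 0 := by
    rintro rfl
    have : k • v = s := by simpa using hsum.symm
    have hfin : {i | (k • v) i ≠ 0}.Finite := this ▸ hs
    have : {i | v i ≠ 0}.Finite := by
      refine hfin.subset ?_
      intro i hi
      simp only [Set.mem_setOf_eq, Pi.smul_apply, smul_eq_mul] at *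
      exact mul_ne_zero hk hi
    exact hVS v hv this
  -- build finsupp from s
  have hsfin : {i | s i ≠ 0}.Finite := hs
  let s' : ℕ →₀ ℤ := ⟨hsfin.toFinset, s, by simp⟩
  refine Set.mem_iUnion.2 ⟨⟨⟨v, hv⟩, k, m, s'⟩, hm, ?_⟩
  have : ⇑s' = s := rfl
  rw [this]
  simp only
  rw [eq_sub_iff_add_eq, add_comm]
  exact hsum
end

section
/- Let D be a torsion-free abelian group with subgroup S such that D/S is torsion-free divisible. Let β : D → D and η : D → D be homomorphisms of the divisible hull restricting appropriately, with β(S) ⊆ S, η(S) ⊆ S, β injective, and β⁻¹(S) = S (viewing S in the divisible hull). For r ∈ ℚ define W_r = {y ∈ D : β(η(y)) − r·β(y) ∈ S ⊗ ℚ has 'finite support', i.e., lies in the divisible hull of S}. Then the subspaces W_r/S of D/S, whenever each is proper, are linearly independent: any relation Σᵢ cᵢwᵢ ∈ S⊗ℚ with wᵢ ∈ W_{rᵢ} \ S, cᵢ ∈ ℚ \ {0}, and distinct rᵢ, is impossible. -/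
/-- Linear independence of the subspaces `W_r/S`. Work inside the divisible hull `V`
(a ℚ-vector space) of `D`, with `S ≤ D` subgroups of `V`, `S` pure in `D`, and
`β, η` linear maps of the hull preserving `D` and `S`, `β` injective with
`β⁻¹(S ⊗ ℚ) = S ⊗ ℚ`.  For `r ∈ ℚ` put `W_r = {y ∈ D | βη(y) − r·β(y) ∈ S ⊗ ℚ}`.
Then no nontrivial relation `Σᵢ cᵢ wᵢ ∈ S ⊗ ℚ` with `wᵢ ∈ W_{rᵢ} \ S`, `cᵢ ≠ 0` and
distinct `rᵢ` is possible. Here `S ⊗ ℚ` is `span ℚ S`. -/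
theorem stmt11 {V : Type*} [AddCommGroup V] [Module ℚ V]
    (D S : AddSubgroup V) (hSD : S ≤ D)
    (β η : V →ₗ[ℚ] V)
    (hβD : ∀ x ∈ D, β x ∈ D) (hηD : ∀ x ∈ D, η x ∈ D)
    (hβS : ∀ x ∈ S, β x ∈ S) (hηS : ∀ x ∈ S, η x ∈ S)
    (hβinj : Function.Injective β)
    (hsat : ∀ x : V, β x ∈ Submodule.span ℚ (S : Set V) →
      x ∈ Submodule.span ℚ (S : Set V))
    (hpure : ∀ x ∈ D, x ∈ Submodule.span ℚ (S : Set V) → x ∈ S)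
    (k : ℕ) (hk : 1 ≤ k)
    (r : Fin k → ℚ) (hr : Function.Injective r)
    (c : Fin k → ℚ) (hc : ∀ i, c i ≠ 0)
    (w : Fin k → V) (hwD : ∀ i, w i ∈ D)
    (hwW : ∀ i, β (η (w i)) - r i • β (w i) ∈ Submodule.span ℚ (S : Set V))
    (hwS : ∀ i, w i ∉ S) :
    ∑ i, c i • w i ∉ Submodule.span ℚ (S : Set V) := by
  set N := Submodule.span ℚ (S : Set V) with hN
  have hβN : N ≤ N.comap β := by
    rw [hN, Submodule.span_le]
    intro x hx
    exact Submodule.subset_span (hβS x hx)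
  have hηN : N ≤ N.comap η := by
    rw [hN, Submodule.span_le]
    intro x hx
    exact Submodule.subset_span (hηS x hx)
  set βq := N.mapQ N β hβN with hβq
  set ηq := N.mapQ N η hηN with hηq
  have hβq_inj : Function.Injective βq := by
    rw [← @LinearMap.ker_eq_bot ℚ, Submodule.eq_bot_iff]
    intro q hq
    obtain ⟨x, rfl⟩ := N.mkQ_surjective q
    have hbx : N.mkQ (β x) = 0 := hq
    rw [Submodule.mkQ_apply, Submodule.Quotient.mk_eq_zero] at hbx ⊢
    exact hsat x hbx
  -- the images of the wᵢ are eigenvectors of ηq with eigenvalues rᵢ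
  have heig : ∀ i, ηq (N.mkQ (w i)) = r i • N.mkQ (w i) := by
    intro i
    apply hβq_inj
    have h1 : βq (ηq (N.mkQ (w i))) = N.mkQ (β (η (w i))) := rfl
    have h2 : βq (r i • N.mkQ (w i)) = N.mkQ (r i • β (w i)) := by
      rw [map_smul, map_smul]; rfl
    rw [h1, h2, Submodule.mkQ_apply, Submodule.mkQ_apply, Submodule.Quotient.eq]
    exact hwW i
  have hne : ∀ i, N.mkQ (w i) ≠ 0 := by
    intro i h
    rw [Submodule.mkQ_apply, Submodule.Quotient.mk_eq_zero] at h
    exact hwS i (hpure (w i) (hwD i) h)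
  have hli : LinearIndependent ℚ (fun i => N.mkQ (w i)) :=
    Module.End.eigenvectors_linearIndependent' ηq r hr _
      (fun i => ⟨Module.End.mem_eigenspace_iff.2 (heig i), hne i⟩)
  intro hmem
  have h0 : ∑ i, c i • N.mkQ (w i) = 0 := by
    have hz : N.mkQ (∑ i, c i • w i) = 0 := by
      rw [Submodule.mkQ_apply, Submodule.Quotient.mk_eq_zero]; exact hmem
    rw [← hz, map_sum]
    simp [map_smul]
  have := linearIndependent_iff'.1 hli Finset.univ c h0 ⟨0, hk⟩ (Finset.mem_univ _)
  exact hc _ this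
end

section
/- Let G be an abelian group such that every endomorphism of G is 'almost scalar', i.e., of the form n + σ where n ∈ ℤ acts by multiplication and σ : G → G has image of finite rank. If G has infinite rank, then G has no direct summand isomorphic to S = ℤ^(ℕ) (the free abelian group of countably infinite rank). -/
/-!
Given a decomposition `G = A ⊕ B` with `A ≅ ℤ^(ℕ)`, let `e` be the shift of `A`, extended by `0`
on `B`. If `e = n + σ`, then on `A` the map `σ = e - n` is injective, because the shift has no
eigenvector. So `σ` embeds `ℤ^(ℕ)` into `G`, and since `G` is torsion-free the image of `σ` has
infinite rank, contradicting that `e` is almost scalar.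
-/

theorem Finsupp.eq_zero_of_mapDomain_succ_eq_smul {R M : Type*} [AddCommMonoid M]
    [SMulZeroClass R M] {n : R} {x : ℕ →₀ M} (h : x.mapDomain Nat.succ = n • x) : x = 0 := by
  by_contra hx
  set i := x.support.max' (Finsupp.support_nonempty_iff.mpr hx)
  have hi : x i ≠ 0 := Finsupp.mem_support_iff.mp (x.support.max'_mem _)
  have hi1 : x (i + 1) = 0 :=
    Finsupp.notMem_support_iff.mp fun hmem ↦ (x.support.le_max' _ hmem).not_gt i.lt_succ_self
  have := DFunLike.congr_fun h (i + 1)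
  rw [Finsupp.mapDomain_apply Nat.succ_injective, Finsupp.smul_apply, hi1, smul_zero] at this
  exact hi this

open TensorProduct in
theorem TensorProduct.one_tmul_injective_of_noZeroSMulDivisors {G : Type*} [AddCommGroup G]
    [NoZeroSMulDivisors ℤ G] :
    Function.Injective fun g : G ↦ (1 : ℚ) ⊗ₜ[ℤ] g := by
  have : IsLocalizedModule (nonZeroDivisors ℤ) (TensorProduct.mk ℤ ℚ G 1) :=
    (isLocalizedModule_iff_isBaseChange _ ℚ _).mpr (TensorProduct.isBaseChange ℤ G ℚ)
  exact (IsLocalizedModule.injective_iff_isRegular (nonZeroDivisors ℤ)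
    (TensorProduct.mk ℤ ℚ G 1)).mpr
      fun c ↦ IsSMulRegular.of_ne_zero (M := G) (nonZeroDivisors.coe_ne_zero c)

theorem AddSubgroup.exists_addMonoidHom_extend_of_isCompl {G H : Type*} [AddCommGroup G]
    [AddCommGroup H] {A B : AddSubgroup G} (hAB : IsCompl A B) (f : A →+ H) :
    ∃ e : G →+ H, ∀ a : A, e a = f a :=
  ⟨(LinearMap.ofIsCompl (AddSubgroup.toIntSubmodule.isCompl hAB) f.toIntLinearMap 0 :),
    fun a ↦ LinearMap.ofIsCompl_apply_left (p := AddSubgroup.toIntSubmodule A) _ a⟩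

open TensorProduct in
theorem aleph0_le_rank_span_one_tmul_range {G : Type*} [AddCommGroup G] [NoZeroSMulDivisors ℤ G]
    (f : (ℕ →₀ ℤ) →+ G) (hf : Function.Injective f) :
    Cardinal.aleph0 ≤ Module.rank ℚ
      (Submodule.span ℚ ((fun g : G ↦ (1 : ℚ) ⊗ₜ[ℤ] g) '' Set.range f)) := by
  set V := Submodule.span ℚ ((fun g : G ↦ (1 : ℚ) ⊗ₜ[ℤ] g) '' Set.range f)
  let F : (ℕ →₀ ℤ) →ₗ[ℤ] ℚ ⊗[ℤ] G := TensorProduct.mk ℤ ℚ G 1 ∘ₗ f.toIntLinearMap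
  have hF : LinearMap.ker F = ⊥ :=
    LinearMap.ker_eq_bot.mpr (one_tmul_injective_of_noZeroSMulDivisors.comp hf)
  have hZ : LinearIndependent ℤ fun i : ℕ ↦ F (Finsupp.single i 1) :=
    (Finsupp.basisSingleOne (R := ℤ) (ι := ℕ)).linearIndependent.map' F hF
  have hQ : LinearIndependent ℚ fun i : ℕ ↦
      (⟨(1 : ℚ) ⊗ₜ[ℤ] f (Finsupp.single i 1), Submodule.subset_span ⟨_, ⟨_, rfl⟩, rfl⟩⟩ : V) :=
    LinearIndependent.of_comp V.subtype ((LinearIndependent.iff_fractionRing ℤ ℚ).mp hZ)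
  simpa using hQ.cardinal_lift_le_rank

open TensorProduct in
theorem stmt12_general {G : Type*} [AddCommGroup G] [NoZeroSMulDivisors ℤ G]
    (hend : ∀ e : G →+ G, ∃ (n : ℤ) (σ : G →+ G),
      Module.rank ℚ (Submodule.span ℚ
        ((fun g : G => (1:ℚ) ⊗ₜ[ℤ] g) '' Set.range σ)) < Cardinal.aleph0 ∧
      ∀ g : G, e g = n • g + σ g) :
    ¬ ∃ (A B : AddSubgroup G), IsCompl A B ∧ Nonempty (A ≃+ (ℕ →₀ ℤ)) := by
  rintro ⟨A, B, hAB, ⟨φ⟩⟩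
  let shift : (ℕ →₀ ℤ) →+ (ℕ →₀ ℤ) := Finsupp.mapDomain.addMonoidHom Nat.succ
  obtain ⟨e, he⟩ := A.exists_addMonoidHom_extend_of_isCompl hAB
    (A.subtype.comp (φ.symm.toAddMonoidHom.comp (shift.comp φ.toAddMonoidHom)))
  obtain ⟨n, σ, hfin, hσ⟩ := hend e
  let f : (ℕ →₀ ℤ) →+ G := σ.comp (A.subtype.comp φ.symm.toAddMonoidHom)
  have hf : Function.Injective f := by
    refine (injective_iff_map_eq_zero f).mpr fun x hx ↦ ?_
    have hx' : σ (φ.symm x) = 0 := hx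
    have hshift : ((φ.symm (shift x) : A) : G) = ((φ.symm (n • x) : A) : G) := by
      simpa [hx', map_zsmul] using (he (φ.symm x)).symm.trans (hσ _)
    exact Finsupp.eq_zero_of_mapDomain_succ_eq_smul
      (φ.symm.injective (Subtype.val_injective hshift))
  exact hfin.not_ge ((aleph0_le_rank_span_one_tmul_range f hf).trans
    (Submodule.rank_mono (Submodule.span_mono
      (Set.image_mono fun _ ⟨x, hx⟩ ↦ ⟨_, hx⟩))))

open TensorProduct in
/-- If every endomorphism of a torsion-free abelian group `G` of infinite rank is almost
scalar (an integer scalar plus an endomorphism whose image has finite ℚ-rank), then `G`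
has no direct summand isomorphic to `S = ℤ^(ℕ)`, the free abelian group of countably
infinite rank. -/
theorem stmt12 {G : Type*} [AddCommGroup G] [NoZeroSMulDivisors ℤ G]
    (hrank : Cardinal.aleph0 ≤ Module.rank ℚ (ℚ ⊗[ℤ] G))
    (hend : ∀ e : G →+ G, ∃ (n : ℤ) (σ : G →+ G),
      Module.rank ℚ (Submodule.span ℚ
        ((fun g : G => (1:ℚ) ⊗ₜ[ℤ] g) '' Set.range σ)) < Cardinal.aleph0 ∧
      ∀ g : G, e g = n • g + σ g) :
    ¬ ∃ (A B : AddSubgroup G), IsCompl A B ∧ Nonempty (A ≃+ (ℕ →₀ ℤ)) :=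
  stmt12_general hend
end
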